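/- Let A be an irreducible nonnegative n×n matrix with ρ(A) = min over B ∈ Ω(A) of ρ(B), and let x be a Perron eigenvector of A. Then for all indices i, j, k: x_k < x_j implies a_{i,k} ≥ a_{i,j}. -/

import Mathlib

open Matrix Finset

/-- The Perron root: the largest nonnegative real eigenvalue of a matrix. -/
noncomputable def perronRoot {n : ℕ} (A : Matrix (Fin n) (Fin n) ℝ) : ℝ :=
  sSup {r : ℝ | 0 ≤ r ∧ ∃ v : Fin n → ℝ, v ≠ 0 ∧ A.mulVec v = r • v}

/-- Ω(A): matrices obtained by permuting the entries within each row of A independently. -/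
def Omega {n : ℕ} (A : Matrix (Fin n) (Fin n) ℝ) : Set (Matrix (Fin n) (Fin n) ℝ) :=
  {B | ∀ i, ∃ φ : Equiv.Perm (Fin n), ∀ j, B i j = A i (φ j)}

/-- Irreducibility: the directed graph of the matrix is strongly connected. -/
def Irred {n : ℕ} (A : Matrix (Fin n) (Fin n) ℝ) : Prop :=
  ∀ i j, ∃ m : ℕ, 0 < m ∧ 0 < (A ^ m) i j

lemma perronRoot_nonneg {n : ℕ} (A : Matrix (Fin n) (Fin n) ℝ) : 0 ≤ perronRoot A :=
  Real.sSup_nonneg (fun _ hr => hr.1)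

lemma pow_entry_nonneg {n : ℕ} (A : Matrix (Fin n) (Fin n) ℝ) (hA : ∀ i j, 0 ≤ A i j) :
    ∀ L i j, 0 ≤ (A ^ L) i j := by
  intro L
  induction L with
  | zero => intro i j; simp [Matrix.one_apply]; split <;> norm_num
  | succ L ih =>
      intro i j
      rw [pow_succ, Matrix.mul_apply]
      exact Finset.sum_nonneg fun p _ => mul_nonneg (ih i p) (hA p j)

theorem stmt6 {n : ℕ} (A : Matrix (Fin n) (Fin n) ℝ) (hA : ∀ i j, 0 ≤ A i j)
    (hirr : Irred A)
    (hmin : perronRoot A = sInf (perronRoot '' Omega A))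
    (x : Fin n → ℝ) (hxpos : ∀ i, 0 < x i) (heig : A.mulVec x = perronRoot A • x) :
    ∀ i j k, x k < x j → A i j ≤ A i k := by
  intro i j k hxkj
  by_contra hcon
  push_neg at hcon
  set ρ := perronRoot A with hρdef
  have hjk : j ≠ k := fun h => absurd (h ▸ hxkj) (lt_irrefl _)
  have heig' : ∀ l, ∑ p, A l p * x p = ρ * x l := by
    intro l
    have := congrFun heig l
    simpa [Matrix.mulVec, dotProduct] using this
  have hρ0 : 0 ≤ ρ := by
    have h1 : 0 ≤ ρ * x i := by
      rw [← heig' i]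
      exact Finset.sum_nonneg fun p _ => mul_nonneg (hA i p) (hxpos p).le
    nlinarith [hxpos i]
  have hρpos : 0 < ρ := by
    rcases hρ0.lt_or_eq with h | h
    · exact h
    · exfalso
      have hsum : ∑ p, A i p * x p = 0 := by rw [heig' i, ← h, zero_mul]
      have hz := (Finset.sum_eq_zero_iff_of_nonneg
        (fun p _ => mul_nonneg (hA i p) (hxpos p).le)).mp hsum j (Finset.mem_univ j)
      have : A i j = 0 := by
        rcases mul_eq_zero.mp hz with h' | h'
        · exact h'
        · exact absurd h' (hxpos j).ne'
      nlinarith [hA i k]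
  set σ := Equiv.swap j k with hσdef
  set B : Matrix (Fin n) (Fin n) ℝ :=
    Matrix.of (fun l p => if l = i then A i (σ p) else A l p) with hBdef
  have hBapp : ∀ l p, B l p = if l = i then A i (σ p) else A l p := fun l p => rfl
  have hB : B ∈ Omega A := by
    intro l
    by_cases h : l = i
    · exact ⟨σ, fun p => by subst h; simp [hBapp]⟩
    · exact ⟨Equiv.refl _, fun p => by simp [hBapp, h]⟩
  have hBnn : ∀ l p, 0 ≤ B l p := by
    intro l p; rw [hBapp]; split <;> apply hA
  have hBrow : ∀ l, l ≠ i → ∑ p, B l p * x p = ρ * x l := by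
    intro l hl
    rw [← heig' l]
    exact Finset.sum_congr rfl fun p _ => by rw [hBapp, if_neg hl]
  -- row i strictly decreases
  have hBi : ∑ p, B i p * x p < ρ * x i := by
    have h1 : ∑ p, B i p * x p = ∑ p, A i (σ p) * x p :=
      Finset.sum_congr rfl fun p _ => by rw [hBapp, if_pos rfl]
    have h2 : ∑ p, A i (σ p) * x p = ∑ p, A i p * x (σ p) := by
      rw [← Equiv.sum_comp σ (fun p => A i p * x (σ p))]
      exact Finset.sum_congr rfl fun p _ => by rw [Equiv.swap_apply_self]
    have h3 : ∀ p, A i p * x (σ p) = A i p * x p +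
        ((if p = j then A i j * (x k - x j) else 0) +
         (if p = k then A i k * (x j - x k) else 0)) := by
      intro p
      by_cases hpj : p = j
      · subst hpj
        rw [if_pos rfl, if_neg hjk, hσdef, Equiv.swap_apply_left]; ring
      · by_cases hpk : p = k
        · subst hpk
          rw [if_neg hpj, if_pos rfl, hσdef, Equiv.swap_apply_right]; ring
        · rw [if_neg hpj, if_neg hpk, hσdef, Equiv.swap_apply_of_ne_of_ne hpj hpk]; ring
    have h4 : ∑ p, A i p * x (σ p) =
        (∑ p, A i p * x p) + (A i j * (x k - x j) + A i k * (x j - x k)) := by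
      rw [Finset.sum_congr rfl fun p _ => h3 p]
      rw [Finset.sum_add_distrib, Finset.sum_add_distrib]
      simp [Finset.sum_ite_eq' Finset.univ j, Finset.sum_ite_eq' Finset.univ k]
    rw [h1, h2, h4, heig' i]
    nlinarith [hcon, hxkj]
  -- minimality: ρ ≤ perronRoot B
  have hρle : ρ ≤ perronRoot B := by
    rw [hmin]
    apply csInf_le
    · exact ⟨0, fun r ⟨C, _, hC⟩ => hC ▸ perronRoot_nonneg C⟩
    · exact ⟨B, hB, rfl⟩
  set SB : Set ℝ := {r : ℝ | 0 ≤ r ∧ ∃ v : Fin n → ℝ, v ≠ 0 ∧ B.mulVec v = r • v} with hSBdef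
  have hPB : perronRoot B = sSup SB := rfl
  -- key: every element of SB is < ρ
  have key : ∀ r ∈ SB, r < ρ := by
    rintro r ⟨hr0, v, hv0, hv⟩
    by_contra hge
    push_neg at hge  -- ρ ≤ r
    set w : Fin n → ℝ := fun l => |v l| with hwdef
    have hwnn : ∀ l, 0 ≤ w l := fun l => abs_nonneg _
    obtain ⟨m, -, hm⟩ := Finset.exists_max_image Finset.univ (fun l => w l / x l)
      ⟨i, Finset.mem_univ i⟩
    set t : ℝ := w m / x m with htdef
    have htx : ∀ l, w l ≤ t * x l := by
      intro l
      have := hm l (Finset.mem_univ l)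
      calc w l = (w l / x l) * x l := (div_mul_cancel₀ (w l) (hxpos l).ne').symm
        _ ≤ t * x l := mul_le_mul_of_nonneg_right this (hxpos l).le
    have ht0 : 0 < t := by
      obtain ⟨l, hl⟩ := Function.ne_iff.mp hv0
      have h1 : 0 < w l := abs_pos.2 hl
      have h2 : 0 < w l / x l := div_pos h1 (hxpos l)
      exact lt_of_lt_of_le h2 (hm l (Finset.mem_univ l))
    have hmS : w m = t * x m := (div_mul_cancel₀ (w m) (hxpos m).ne').symm
    have hvineq : ∀ l, r * w l ≤ ∑ p, B l p * w p := by
      intro l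
      have h1 : ∑ p, B l p * v p = r * v l := by
        have := congrFun hv l
        simpa [Matrix.mulVec, dotProduct] using this
      calc r * w l = |r * v l| := by rw [abs_mul, abs_of_nonneg hr0]
        _ = |∑ p, B l p * v p| := by rw [h1]
        _ ≤ ∑ p, |B l p * v p| := Finset.abs_sum_le_sum_abs _ _
        _ = ∑ p, B l p * w p := Finset.sum_congr rfl fun p _ => by
              rw [abs_mul, abs_of_nonneg (hBnn l p)]
    -- if i is saturated, contradiction
    have hiS : w i = t * x i → False := by
      intro h
      have h2 := hvineq i
      have h3 : ∑ p, B i p * w p ≤ t * ∑ p, B i p * x p := by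
        rw [Finset.mul_sum]
        apply Finset.sum_le_sum
        intro p _
        calc B i p * w p ≤ B i p * (t * x p) :=
              mul_le_mul_of_nonneg_left (htx p) (hBnn i p)
          _ = t * (B i p * x p) := by ring
      have h4 : t * (∑ p, B i p * x p) < t * (ρ * x i) :=
        mul_lt_mul_of_pos_left hBi ht0
      have h5 : ρ * (t * x i) ≤ r * (t * x i) :=
        mul_le_mul_of_nonneg_right hge (mul_nonneg ht0.le (hxpos i).le)
      rw [h] at h2
      nlinarith
    -- saturation propagates along edges not at i
    have hstep : ∀ l, w l = t * x l → l ≠ i → ∀ p, 0 < A l p → w p = t * x p := by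
      intro l hl hli p hp
      have h2 := hvineq l
      have hBeq : ∀ q, B l q = A l q := fun q => by rw [hBapp, if_neg hli]
      have h3 : ∑ q, B l q * w q = ∑ q, A l q * w q :=
        Finset.sum_congr rfl fun q _ => by rw [hBeq]
      have h4 : ∑ q, A l q * (t * x q) = t * (ρ * x l) := by
        rw [← heig' l, Finset.mul_sum]
        exact Finset.sum_congr rfl fun q _ => by ring
      have h5 : ρ * (t * x l) ≤ r * w l := by
        rw [hl]
        exact mul_le_mul_of_nonneg_right hge (mul_nonneg ht0.le (hxpos l).le)
      have hsum0 : ∑ q, A l q * (t * x q - w q) = 0 := by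
        have hexp : ∑ q, A l q * (t * x q - w q)
            = ∑ q, A l q * (t * x q) - ∑ q, A l q * w q := by
          rw [← Finset.sum_sub_distrib]
          exact Finset.sum_congr rfl fun q _ => by ring
        have hge0 : 0 ≤ ∑ q, A l q * (t * x q - w q) :=
          Finset.sum_nonneg fun q _ => mul_nonneg (hA l q) (by linarith [htx q])
        rw [h3] at h2
        rw [hexp, h4]
        linarith
      have := (Finset.sum_eq_zero_iff_of_nonneg
        (fun q _ => mul_nonneg (hA l q) (by linarith [htx q]))).mp hsum0 p (Finset.mem_univ p)
      rcases mul_eq_zero.mp this with h' | h'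
      · exact absurd h' hp.ne'
      · linarith
    -- propagate from m to i along a path in A
    have hpow : ∀ L l, 0 < (A ^ L) m l → w l = t * x l ∨ w i = t * x i := by
      intro L
      induction L with
      | zero =>
          intro l hl
          by_cases h : m = l
          · subst h; exact Or.inl hmS
          · simp [Matrix.one_apply, h] at hl
      | succ L ih =>
          intro l hl
          rw [pow_succ, Matrix.mul_apply] at hl
          have : ∃ p ∈ Finset.univ, (0 : ℝ) < (A ^ L) m p * A p l := by
            by_contra hno
            push_neg at hno
            have : ∑ p, (A ^ L) m p * A p l ≤ 0 :=
              Finset.sum_nonpos fun p hp => hno p hp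
            linarith
          obtain ⟨p, -, hp⟩ := this
          have hp1 : 0 < (A ^ L) m p := by
            rcases (mul_pos_iff.mp hp) with ⟨h1, _⟩ | ⟨h1, _⟩
            · exact h1
            · exact absurd h1 (not_lt.mpr (pow_entry_nonneg A hA L m p))
          have hp2 : 0 < A p l := by
            rcases (mul_pos_iff.mp hp) with ⟨_, h2⟩ | ⟨_, h2⟩
            · exact h2
            · exact absurd h2 (not_lt.mpr (hA p l))
          rcases ih p hp1 with hS | hi
          · by_cases hpi : p = i
            · exact Or.inr (hpi ▸ hS)
            · exact Or.inl (hstep p hS hpi l hp2)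
          · exact Or.inr hi
    obtain ⟨L, -, hL⟩ := hirr m i
    rcases hpow L i hL with h | h <;> exact hiS h
  -- SB is nonempty
  have hSBne : SB.Nonempty := by
    by_contra h
    rw [Set.not_nonempty_iff_eq_empty] at h
    have h0 : perronRoot B = 0 := by rw [hPB, h, Real.sSup_empty]
    rw [h0] at hρle
    linarith
  -- SB is finite
  have hSBfin : SB.Finite := by
    apply Set.Finite.subset
      (Module.End.finite_hasEigenvalue (R := ℝ) (M := Fin n → ℝ) (Matrix.mulVecLin B))
    rintro r ⟨hr0, v, hv0, hv⟩
    exact Module.End.hasEigenvalue_of_hasEigenvector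
      ⟨Module.End.mem_eigenspace_iff.mpr (by simpa [Matrix.mulVecLin_apply] using hv), hv0⟩
  have hmem : sSup SB ∈ SB := hSBne.csSup_mem hSBfin
  have hlt := key _ hmem
  rw [← hPB] at hlt
  linarith
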